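/- Let V and M be connected, locally path-connected topological spaces, let ι : V → M be a topological embedding, and let v₀ ∈ V be such that ι_* : π₁(V, v₀) → π₁(M, ι(v₀)) is injective. Let p : Ṽ → V and P : M̃ → M be covering maps with Ṽ and M̃ path-connected, let x̃ ∈ p⁻¹(v₀) and ã ∈ P⁻¹(ι(v₀)), and suppose P_*(π₁(M̃, ã)) = (ι ∘ p)_*(π₁(Ṽ, x̃)) as subgroups of π₁(M, ι(v₀)). Let ψ̄ : Ṽ → M̃ be a continuous map with P ∘ ψ̄ = ι ∘ p and ψ̄(x̃) = ã. Then ψ̄ is a topological embedding: ψ̄ is injective and is a homeomorphism onto its image. -/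

import Mathlib

open CategoryTheory

universe u

/-- The homomorphism on fundamental groups induced by a continuous map. -/
noncomputable def piMap {X Y : Type u} [TopologicalSpace X] [TopologicalSpace Y]
    (f : C(X, Y)) (x : X) :
    FundamentalGroup X x →* FundamentalGroup Y (f x) :=
  CategoryTheory.Functor.mapEnd (X := FundamentalGroupoid.mk x)
    (FundamentalGroupoid.fundamentalGroupoidFunctor.map (X := TopCat.of X) (Y := TopCat.of Y) (TopCat.ofHom f))

/-- Transport of fundamental groups along an equality of basepoints. -/
noncomputable def pi1Cast {X : Type u} [TopologicalSpace X] {a b : X} (h : a = b) :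
    FundamentalGroup X a ≃* FundamentalGroup X b := by
  subst h; exact MulEquiv.refl _

/-!
If `ψ̄ y₁ = ψ̄ y₂` then `p y₁ = p y₂`, as `ι` is injective. Join `x̃` to `y₁` and `y₂` by paths
`γ₁, γ₂`; the loop `ψ̄γ₁ · (ψ̄γ₂)⁻¹` at `ã` lies over `ι ∘ α` with `α = pγ₁ · (pγ₂)⁻¹`, so
`ι_*[α] ∈ P_*π₁(M̃, ã) ⊆ ι_* p_* π₁(Ṽ, x̃)`, and injectivity of `ι_*` puts `[α]` in
`p_*π₁(Ṽ, x̃)`. The monodromy of `[α]` therefore fixes `x̃`, which says that `[pγ₁]` and `[pγ₂]`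
carry `x̃` to the same point of the fibre: `y₁ = y₂`.

For the embedding, let `y ∈ O` with `O` open, `S` an open set around `ψ̄ y` on which `P` is
injective, and `T` open with `ι⁻¹ T = p (O ∩ ψ̄⁻¹ S)`. If `ψ̄ w ∈ S ∩ P⁻¹ T`, then `p w = p w'` for
some `w' ∈ O ∩ ψ̄⁻¹ S`, so `P (ψ̄ w) = P (ψ̄ w')` with both points in `S`, whence `w = w' ∈ O`.
-/

open Function Topology FundamentalGroup

theorem pi1Cast_comp_piMap {X Y : Type u} [TopologicalSpace X] [TopologicalSpace Y]
    (f : C(X, Y)) {x : X} {y : Y} (h : f x = y) :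
    (pi1Cast h).toMonoidHom.comp (piMap f x) = mapOfEq f h := by
  subst h
  ext γ
  rw [mapOfEq_apply, Path.Homotopic.Quotient.cast_rfl_rfl]
  rfl

theorem FundamentalGroup.map_comp {X Y Z : Type*} [TopologicalSpace X] [TopologicalSpace Y]
    [TopologicalSpace Z] (g : C(Y, Z)) (f : C(X, Y)) (x : X) :
    map (g.comp f) x = (map g (f x)).comp (map f x) := by
  ext γ
  induction γ using Quotient.inductionOn
  rfl

namespace IsCoveringMap

variable {E X : Type*} [TopologicalSpace E] [TopologicalSpace X] {p : E → X}

theorem monodromy_mk_eq_of_lift (cov : IsCoveringMap p) {x₀ x₁ : X} (γ : Path x₀ x₁)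
    (e₀ : p ⁻¹' {x₀}) (e₁ : p ⁻¹' {x₁}) (Γ : Path e₀.1 e₁.1) (hΓ : ∀ t, p (Γ t) = γ t) :
    cov.monodromy (.mk γ) e₀ = e₁ :=
  cov.monodromy_eq_of_map_eq (.mk Γ) <|
    congrArg Path.Homotopic.Quotient.mk (Path.ext (funext hΓ))

theorem monodromy_eq_self_of_mem_range (cov : IsCoveringMap p) {e : E}
    {γ : FundamentalGroup X (p e)} (hγ : γ ∈ (map ⟨p, cov.continuous⟩ e).range) :
    cov.monodromy γ ⟨e, rfl⟩ = ⟨e, rfl⟩ := by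
  obtain ⟨β, rfl⟩ := hγ
  exact cov.monodromy_map β

theorem monodromy_eq_of_monodromy_trans_symm_eq (cov : IsCoveringMap p) {x₀ x₁ : X}
    {γ₁ γ₂ : Path.Homotopic.Quotient x₀ x₁} {e : p ⁻¹' {x₀}}
    (h : cov.monodromy (γ₁.trans γ₂.symm) e = e) :
    cov.monodromy γ₁ e = cov.monodromy γ₂ e := by
  apply (cov.monodromy_bijective γ₂.symm).injective
  rw [← monodromy_trans_apply, h, ← monodromy_trans_apply, Path.Homotopic.Quotient.trans_symm,
    monodromy_refl, id]

theorem injective_of_comp_eq_of_range_le {F Y : Type*} [TopologicalSpace F] [TopologicalSpace Y]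
    [PathConnectedSpace E] (cov : IsCoveringMap p) {ι : C(X, Y)} (hι : Injective ι)
    {P : C(F, Y)} {ψ : C(E, F)} (hcomm : ∀ e, P (ψ e) = ι (p e)) (e₀ : E)
    (hι_inj : Injective (map ι (p e₀)))
    (hle : (mapOfEq P (hcomm e₀)).range ≤ (map (ι.comp ⟨p, cov.continuous⟩) e₀).range) :
    Injective ψ := by
  intro y₁ y₂ hψ
  have hp₁₂ : p y₁ = p y₂ := hι (by rw [← hcomm, ← hcomm, hψ])
  let γ₁ := PathConnectedSpace.somePath e₀ y₁
  let γ₂ := PathConnectedSpace.somePath e₀ y₂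
  let δ₁ : Path (p e₀) (p y₁) := γ₁.map cov.continuous
  let δ₂ : Path (p e₀) (p y₁) := (γ₂.map cov.continuous).cast rfl hp₁₂
  have hloop : fromPath ((Path.Homotopic.Quotient.mk δ₁).trans
      (Path.Homotopic.Quotient.mk δ₂).symm) ∈ (map ⟨p, cov.continuous⟩ e₀).range := by
    have hψ_loop : mapOfEq P (hcomm e₀) (Path.Homotopic.Quotient.mk
        ((γ₁.map ψ.continuous).trans ((γ₂.map ψ.continuous).cast rfl hψ).symm)) =
        map ι (p e₀) (fromPath ((Path.Homotopic.Quotient.mk δ₁).trans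
          (Path.Homotopic.Quotient.mk δ₂).symm)) := by
      rw [mapOfEq_apply, map_apply]
      refine congrArg Path.Homotopic.Quotient.mk (Path.ext (funext fun t => ?_))
      simp only [Path.cast_coe, Path.map_coe, Function.comp_apply, Path.trans_apply,
        Path.symm_apply]
      split_ifs <;> simp [δ₁, δ₂, hcomm]
    have hmem := hle ⟨_, hψ_loop⟩
    rw [map_comp, ← MonoidHom.map_range] at hmem
    exact (Subgroup.mem_map_iff_mem hι_inj).mp hmem
  have h := cov.monodromy_eq_of_monodromy_trans_symm_eq (cov.monodromy_eq_self_of_mem_range hloop)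
  rw [cov.monodromy_mk_eq_of_lift δ₁ _ ⟨y₁, rfl⟩ γ₁ fun _ => rfl,
    cov.monodromy_mk_eq_of_lift δ₂ _ ⟨y₂, hp₁₂.symm⟩ γ₂ fun _ => rfl] at h
  exact congrArg Subtype.val h

end IsCoveringMap

theorem isEmbedding_of_comp_eq {E X F Y : Type*} [TopologicalSpace E] [TopologicalSpace X]
    [TopologicalSpace F] [TopologicalSpace Y] {q : E → X} {ι : X → Y} {P : F → Y} {ψ : E → F}
    (hq : IsOpenMap q) (hι : IsInducing ι) (hP : IsLocalHomeomorph P) (hψ : Continuous ψ)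
    (hψ_inj : Injective ψ) (hcomm : ∀ e, P (ψ e) = ι (q e)) : IsEmbedding ψ := by
  refine ⟨isInducing_iff_nhds.mpr fun y => le_antisymm (hψ.tendsto y).le_comap fun O hO => ?_,
    hψ_inj⟩
  obtain ⟨S, hS, hyS, hPS⟩ := hP.isLocallyInjective (ψ y)
  set W := interior O ∩ ψ ⁻¹' S
  have hyW : y ∈ W := ⟨mem_interior_iff_mem_nhds.mpr hO, hyS⟩
  obtain ⟨T, hT, hTW⟩ := hι.isOpen_iff.mp (hq W (isOpen_interior.inter (hS.preimage hψ)))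
  have hT_iff : ∀ e, P (ψ e) ∈ T ↔ q e ∈ q '' W := fun e => by
    rw [hcomm, ← hTW, Set.mem_preimage]
  refine Filter.mem_comap.mpr ⟨S ∩ P ⁻¹' T,
    (hS.inter (hT.preimage hP.continuous)).mem_nhds ⟨hyS, (hT_iff y).mpr ⟨y, hyW, rfl⟩⟩,
    fun w ⟨hwS, hwT⟩ => ?_⟩
  obtain ⟨w', hw'W, hw'⟩ := (hT_iff w).mp hwT
  have hψw : ψ w' = ψ w := hPS hw'W.2 hwS (by rw [hcomm, hcomm, hw'])
  exact interior_subset (hψ_inj hψw ▸ hw'W.1)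

theorem lift_isEmbedding_general
    {V M Vt Mt : Type u} [TopologicalSpace V] [TopologicalSpace M]
    [TopologicalSpace Vt] [TopologicalSpace Mt]
    (iota : V → M) (hiota_cont : Continuous iota) (hiota : Topology.IsEmbedding iota)
    (p : Vt → V) (hp : IsCoveringMap p) [PathConnectedSpace Vt]
    (P : Mt → M) (hP : IsCoveringMap P)
    (xt : Vt)
    (hinj : Function.Injective (piMap ⟨iota, hiota_cont⟩ (p xt)))
    (at_ : Mt) (hat : P at_ = iota (p xt))
    (hrange : Subgroup.map (pi1Cast hat).toMonoidHom (piMap ⟨P, hP.continuous⟩ at_).range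
      = (piMap ((⟨iota, hiota_cont⟩ : C(V, M)).comp ⟨p, hp.continuous⟩) xt).range)
    (psib : Vt → Mt) (hpsib_cont : Continuous psib)
    (hcomm : ∀ y : Vt, P (psib y) = iota (p y))
    (hbase : psib xt = at_) :
    Function.Injective psib ∧ Topology.IsEmbedding psib := by
  subst hbase
  have hle : (mapOfEq ⟨P, hP.continuous⟩ hat).range ≤
      (map ((⟨iota, hiota_cont⟩ : C(V, M)).comp ⟨p, hp.continuous⟩) xt).range := by
    rw [← pi1Cast_comp_piMap, ← MonoidHom.map_range]
    exact hrange.le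
  have hψ_inj : Injective psib :=
    hp.injective_of_comp_eq_of_range_le (ψ := ⟨psib, hpsib_cont⟩) hiota.injective hcomm xt hinj hle
  exact ⟨hψ_inj, isEmbedding_of_comp_eq hp.isOpenMap hiota.isInducing hP.isLocalHomeomorph
    hpsib_cont hψ_inj hcomm⟩

/-- Footnote of Section 3.2: the lift `ψ̄ : Ṽ → M̃` of `ι ∘ p` to the covering `P`,
chosen so that `P_*π₁(M̃, ã) = (ι ∘ p)_*π₁(Ṽ, x̃)`, is a topological embedding. -/
theorem lift_isEmbedding
    {V M Vt Mt : Type u} [TopologicalSpace V] [TopologicalSpace M]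
    [TopologicalSpace Vt] [TopologicalSpace Mt]
    [ConnectedSpace V] [LocallyPathConnectedSpace V]
    [ConnectedSpace M] [LocallyPathConnectedSpace M]
    (iota : V → M) (hiota_cont : Continuous iota) (hiota : Topology.IsEmbedding iota)
    (p : Vt → V) (hp : IsCoveringMap p) [PathConnectedSpace Vt]
    (P : Mt → M) (hP : IsCoveringMap P) [PathConnectedSpace Mt]
    (xt : Vt)
    (hinj : Function.Injective (piMap ⟨iota, hiota_cont⟩ (p xt)))
    (at_ : Mt) (hat : P at_ = iota (p xt))
    (hrange : Subgroup.map (pi1Cast hat).toMonoidHom (piMap ⟨P, hP.continuous⟩ at_).range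
      = (piMap ((⟨iota, hiota_cont⟩ : C(V, M)).comp ⟨p, hp.continuous⟩) xt).range)
    (psib : Vt → Mt) (hpsib_cont : Continuous psib)
    (hcomm : ∀ y : Vt, P (psib y) = iota (p y))
    (hbase : psib xt = at_) :
    Function.Injective psib ∧ Topology.IsEmbedding psib :=
  lift_isEmbedding_general iota hiota_cont hiota p hp P hP xt hinj at_ hat hrange psib hpsib_cont
    hcomm hbase
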